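/- arXiv:2207.11811 — 2 statements merged into one kernel-verified Lean document; each statement's English description precedes it below -/
import Mathlib

section
/- For every even integer n greater than four, the 3-uniform hypergraph based on the cycle C_n is not metric. -/
universe u

/-- A function `d` is a metric (distance function) on `α`. -/
structure IsMetric {α : Type*} (d : α → α → ℝ) : Prop where
  eq_iff : ∀ x y, d x y = 0 ↔ x = y
  symm : ∀ x y, d x y = d y x
  triangle : ∀ x y z, d x z ≤ d x y + d y z

/-- `[u v w]`: the points are pairwise distinct and `v` lies between `u` and `w`. -/
def MBtw {α : Type*} (d : α → α → ℝ) (u v w : α) : Prop :=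
  u ≠ v ∧ u ≠ w ∧ v ≠ w ∧ d u v + d v w = d u w

/-- The hyperedge set `E_M` associated with a metric space: all triples
`{x,y,z}` such that one of the three points is between the other two. -/
def metricEdges {α : Type*} (d : α → α → ℝ) : Set (Set α) :=
  {s | ∃ u v w : α, s = {u, v, w} ∧ MBtw d u v w}

/-- A 3-uniform hypergraph (given by its hyperedge set on vertex type `V`)
is metric if there is a metric space on ground set `V` with `E = E_M`. -/
def IsMetricHypergraph {V : Type*} (E : Set (Set V)) : Prop :=
  ∃ d : V → V → ℝ, IsMetric d ∧ E = metricEdges d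

/-- The hypergraph based on a graph `G`: the vertex set is `V ∪ {x}` (here
`Option V`, with `none` playing the role of the extra point `x`); the
hyperedges are all three-point subsets of `V` together with all sets
`{x,u,v}` with `{u,v}` an edge of `G`. -/
def basedOn {V : Type*} (G : SimpleGraph V) : Set (Set (Option V)) :=
  {s | (∃ u v w : V, u ≠ v ∧ u ≠ w ∧ v ≠ w ∧ s = {some u, some v, some w}) ∨
       (∃ u v : V, G.Adj u v ∧ s = {none, some u, some v})}

/-- The hyperedge set of the subhypergraph induced on `U`. -/
def inducedEdges {V : Type*} (E : Set (Set V)) (U : Set V) : Set (Set U) :=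
  {s | Subtype.val '' s ∈ E}

/-- The line `L_M(xy)` determined by two points of a metric space. -/
def lineOf {α : Type*} (d : α → α → ℝ) (x y : α) : Set α :=
  {x, y} ∪ {z | ({x, y, z} : Set α) ∈ metricEdges d}

/-- `e` is a two-point set forming an edge of `G`. -/
def IsEdgePair {V : Type*} (G : SimpleGraph V) (e : Set V) : Prop :=
  ∃ u v : V, G.Adj u v ∧ e = {u, v}

/-- The equivalence relation `≡_G`: two pairs are equivalent iff both are
edges of `G` or both are non-edges of `G`. -/
def graphEquiv {V : Type*} (G : SimpleGraph V) (e f : Set V) : Prop :=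
  (IsEdgePair G e ∧ IsEdgePair G f) ∨ (¬ IsEdgePair G e ∧ ¬ IsEdgePair G f)

/-- A relation `r` on two-point subsets of `V` is an obstacle if no metric
space on a superset `W` of `V` has `L_M(ab) = L_M(cd) ↔ {a,b} r {c,d}`
for all two-point subsets `{a,b}`, `{c,d}` of `V`. -/
def IsObstacle {V : Type u} (r : Set V → Set V → Prop) : Prop :=
  ¬ ∃ (W : Type u) (f : V ↪ W) (d : W → W → ℝ), IsMetric d ∧
      ∀ a b c e : V, a ≠ b → c ≠ e →
        (lineOf d (f a) (f b) = lineOf d (f c) (f e) ↔ r {a, b} {c, e})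

/-- The restriction of a relation on two-point subsets of `V` to the
two-point subsets of `U ⊆ V`. -/
def restrictRel {V : Type*} (r : Set V → Set V → Prop) (U : Set V) :
    Set U → Set U → Prop :=
  fun e f => r (Subtype.val '' e) (Subtype.val '' f)

/-!
All triples of cycle vertices are hyperedges, so by Menger's theorem the cycle vertices sit
isometrically on a line. If `a i` is the distance from the extra point `x` to vertex `i`, the
triangle inequality makes the intervals of radius `a i` around the vertices pairwise overlapping
and ordered by their midpoints, and `{x, i, j}` is a hyperedge exactly when the intervals of `i`
and `j` share an endpoint. As `C_n` is triangle-free, two intervals can only touch (the right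
end of one being the left end of the other) when they carry the extreme midpoints, so at most
one edge touches, while the vertex of smallest midpoint forces a touching edge. At every vertex
the two incident edges use opposite endpoints, and along a non-touching edge both intervals use
the same side; walking around the cycle, the side therefore flips `n - 1` times and comes back
to itself, which is impossible for even `n`.
-/

open Finset

namespace IsMetric

variable {α : Type*} {d : α → α → ℝ}

theorem apply_self (hd : IsMetric d) (x : α) : d x x = 0 := (hd.eq_iff x x).mpr rfl

theorem nonneg (hd : IsMetric d) (x y : α) : 0 ≤ d x y := by
  linarith [hd.triangle x y x, hd.apply_self x, hd.symm x y]

theorem pos (hd : IsMetric d) {x y : α} (h : x ≠ y) : 0 < d x y :=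
  (hd.nonneg x y).lt_of_ne fun h' => h ((hd.eq_iff x y).mp h'.symm)

theorem comp {β : Type*} (hd : IsMetric d) {f : β → α} (hf : Function.Injective f) :
    IsMetric fun x y => d (f x) (f y) :=
  ⟨fun _ _ => (hd.eq_iff _ _).trans hf.eq_iff, fun _ _ => hd.symm _ _,
    fun _ _ _ => hd.triangle _ _ _⟩

end IsMetric

def Aligned {α : Type*} (d : α → α → ℝ) (x y z : α) : Prop :=
  d x y + d y z = d x z ∨ d y z + d z x = d y x ∨ d z x + d x y = d z y

section Aligned

variable {α : Type*} {d : α → α → ℝ}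

theorem Aligned.rotate {x y z : α} (h : Aligned d x y z) : Aligned d y z x := by
  unfold Aligned at *; tauto

theorem Aligned.swap (hd : IsMetric d) {x y z : α} (h : Aligned d x y z) : Aligned d y x z := by
  have := hd.symm x y; have := hd.symm y z; have := hd.symm z x
  rcases h with h | h | h
  · exact Or.inr (Or.inr (by linarith))
  · exact Or.inr (Or.inl (by linarith))
  · exact Or.inl (by linarith)

theorem IsMetric.aligned_of_eq_or_eq_or_eq (hd : IsMetric d) {x y z : α}
    (h : x = y ∨ x = z ∨ y = z) : Aligned d x y z := by
  rcases h with rfl | rfl | rfl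
  · exact Or.inl (by rw [hd.apply_self, zero_add])
  · exact Or.inr (Or.inl (by rw [hd.apply_self, add_zero]))
  · exact Or.inl (by rw [hd.apply_self, add_zero])

theorem mem_metricEdges_iff (hd : IsMetric d) {a b c : α} (hab : a ≠ b) (hac : a ≠ c)
    (hbc : b ≠ c) : ({a, b, c} : Set α) ∈ metricEdges d ↔ Aligned d a b c := by
  constructor
  · rintro ⟨u, v, w, hs, huv, huw, hvw, h⟩
    have hmem : ∀ t, t ∈ ({u, v, w} : Set α) ↔ t = u ∨ t = v ∨ t = w := fun _ => Iff.rfl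
    obtain ⟨ha, hb, hc⟩ : (a = u ∨ a = v ∨ a = w) ∧ (b = u ∨ b = v ∨ b = w) ∧
        (c = u ∨ c = v ∨ c = w) := by
      simp only [← hmem, ← hs, Set.mem_insert_iff, Set.mem_singleton_iff, true_or, or_true,
        and_self]
    have h : Aligned d u v w := Or.inl h
    rcases ha with rfl | rfl | rfl <;> rcases hb with rfl | rfl | rfl <;>
      rcases hc with rfl | rfl | rfl <;>
      first
      | exact absurd rfl hab | exact absurd rfl hac | exact absurd rfl hbc
      | exact h | exact h.rotate | exact h.rotate.rotate
      | exact h.swap hd | exact (h.swap hd).rotate | exact (h.swap hd).rotate.rotate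
  · rintro (h | h | h)
    · exact ⟨a, b, c, rfl, hab, hac, hbc, h⟩
    · exact ⟨b, c, a, by ext; simp only [Set.mem_insert_iff, Set.mem_singleton_iff]; tauto,
        hbc, hab.symm, hac.symm, h⟩
    · exact ⟨c, a, b, by ext; simp only [Set.mem_insert_iff, Set.mem_singleton_iff]; tauto,
        hac.symm, hbc.symm, hab, h⟩

end Aligned

section LineEmbedding

variable {α : Type*} {d : α → α → ℝ}

theorem Aligned.dist_eq (hd : IsMetric d) {p r s : α} (h : Aligned d p r s) :
    d r s = |d p r - d p s| ∨ d r s = d p r + d p s := by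
  have := hd.symm p r; have := hd.symm r s; have := hd.symm s p
  rcases h with h | h | h
  · exact Or.inl (by rw [abs_sub_comm, abs_of_nonneg (by linarith [hd.nonneg r s])]; linarith)
  · exact Or.inl (by rw [abs_of_nonneg (by linarith [hd.nonneg r s])]; linarith)
  · exact Or.inr (by linarith)

theorem dist_add_dist_eq_of_forall_le (hd : IsMetric d) {p q : α}
    (hmax : ∀ x y, d x y ≤ d p q) {u : α} (h : Aligned d p u q) : d p u + d u q = d p q := by
  have := hd.symm p q; have := hd.symm p u; have := hd.symm u q
  have := hd.nonneg p u; have := hd.nonneg u q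
  have := hmax u p; have := hmax q u
  rcases h with h | h | h <;> linarith

theorem abs_sub_add_abs_sub_lt {a x D : ℝ} (ha : 0 < a) (haD : a < D) (hx : 0 < x)
    (hxD : x < D) : |a - x| + |x - (D - a)| < D := by
  rcases abs_cases (a - x) with ⟨h, -⟩ | ⟨h, -⟩ <;>
    rcases abs_cases (x - (D - a)) with ⟨h', -⟩ | ⟨h', -⟩ <;> linarith

/-- Menger's theorem. Four points would not do: the unit four-cycle has all triples aligned. -/
theorem exists_eq_abs_sub_of_aligned [Fintype α] (hd : IsMetric d)
    (hcard : 5 ≤ Fintype.card α) (hal : ∀ x y z, Aligned d x y z) :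
    ∃ f : α → ℝ, ∀ x y, d x y = |f x - f y| := by
  classical
  have : Nonempty α := Fintype.card_pos_iff.mp (by omega)
  obtain ⟨⟨p, q⟩, hmax⟩ := Finite.exists_max fun z : α × α => d z.1 z.2
  set D := d p q
  have hbtw : ∀ u, d p u + d u q = D := fun u =>
    dist_add_dist_eq_of_forall_le hd (fun x y => hmax (x, y)) (hal p u q)
  -- A pair `r s` is either embedded correctly by `d p ·`, or it is a second diameter.
  have hdich : ∀ r s, d r s = |d p r - d p s| ∨ (d r s = D ∧ d p r + d p s = D) := by
    intro r s
    have := hbtw r; have := hbtw s; have := hd.symm r q; have := hd.symm s q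
    rcases (hal p r s).dist_eq hd with h | h
    · exact Or.inl h
    rcases (hal q r s).dist_eq hd with h' | h'
    · left; rw [h', abs_sub_comm]; congr 1; linarith
    · right; constructor <;> linarith
  refine ⟨d p, fun r s => ?_⟩
  by_contra hrs
  obtain ⟨hD, hsum⟩ := (hdich r s).resolve_left hrs
  -- A fifth point `t` would lie between the diameters `p q` and `r s` at once.
  obtain ⟨t, -, ht⟩ := Finset.exists_mem_notMem_of_card_lt_card
    (s := {p, q, r, s}) (t := Finset.univ) (by
      rw [Finset.card_univ]; exact (Finset.card_le_four).trans_lt (by omega))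
  simp only [Finset.mem_insert, Finset.mem_singleton, not_or] at ht
  obtain ⟨htp, htq, htr, hts⟩ := ht
  have hrts : d r t + d t s = D := by
    rw [← hD]; exact dist_add_dist_eq_of_forall_le hd (hD ▸ fun x y => hmax (x, y)) (hal r t s)
  have hrt : d r t = |d p r - d p t| := by
    refine (hdich r t).resolve_right fun h => hts ((hd.eq_iff t s).mp ?_)
    linarith
  have hts' : d t s = |d p t - d p s| := by
    refine (hdich t s).resolve_right fun h => htr ((hd.eq_iff r t).mp ?_).symm
    linarith
  have := hd.nonneg p s
  have hr0 : 0 < d p r := lt_of_le_of_ne (hd.nonneg p r) fun h => hrs (by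
    rw [hD, ← h, zero_sub, abs_neg, abs_of_nonneg] <;> linarith)
  have hrD : d p r < D := lt_of_le_of_ne (by linarith) fun h => hrs (by
    rw [hD, h, abs_of_nonneg] <;> linarith)
  have := hd.pos (Ne.symm htp); have := hd.pos htq; have := hbtw t
  have key := abs_sub_add_abs_sub_lt hr0 hrD (x := d p t) (by linarith) (by linarith)
  rw [hrt, hts', show d p s = D - d p r by linarith] at hrts
  linarith

end LineEmbedding

/-- The intervals `[c - a, c + a]` and `[c' - a', c' + a']` share an endpoint iff one of
`a`, `a'`, `|c - c'|` is the sum of the other two. -/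
theorem exists_common_endpoint_iff {c c' a a' : ℝ} (ha : 0 ≤ a) (ha' : 0 ≤ a') :
    (a + |c - c'| = a' ∨ |c - c'| + a' = a ∨ a' + a = |c' - c|) ↔
      ∃ v, (c - a = v ∨ c + a = v) ∧ (c' - a' = v ∨ c' + a' = v) := by
  rw [abs_sub_comm c' c]
  constructor
  · rcases abs_cases (c - c') with ⟨h, -⟩ | ⟨h, -⟩ <;> rw [h] <;> rintro (h | h | h)
    · exact ⟨c + a, Or.inr rfl, Or.inr (by linarith)⟩
    · exact ⟨c - a, Or.inl rfl, Or.inl (by linarith)⟩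
    · exact ⟨c - a, Or.inl rfl, Or.inr (by linarith)⟩
    · exact ⟨c - a, Or.inl rfl, Or.inl (by linarith)⟩
    · exact ⟨c + a, Or.inr rfl, Or.inr (by linarith)⟩
    · exact ⟨c + a, Or.inr rfl, Or.inl (by linarith)⟩
  · rintro ⟨v, rfl | rfl, h | h⟩ <;> rcases abs_cases (c - c') with ⟨h', _⟩ | ⟨h', _⟩ <;>
      rw [h'] <;> first | (left; linarith) | (right; left; linarith) | (right; right; linarith)

/-- Vertex `i` is represented by the interval `[l i, r i]`; the intervals are pairwise
overlapping, ordered consistently by their midpoints, and adjacency means sharing an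
endpoint. For the hypergraph based on `G` the interval of `i` is the ball of radius
`dist(x, i)` around the position of `i` on the line. -/
structure IsEndpointModel {V : Type*} (G : SimpleGraph V) (l r : V → ℝ) : Prop where
  lt : ∀ i, l i < r i
  mid_injective : Function.Injective fun i => l i + r i
  le_of_mid_lt : ∀ i j, l i + r i < l j + r j → l i ≤ l j ∧ r i ≤ r j ∧ l j ≤ r i
  adj_iff : ∀ i j, i ≠ j → (G.Adj i j ↔ ∃ v, (l i = v ∨ r i = v) ∧ (l j = v ∨ r j = v))

theorem IsEndpointModel.of_metric {V : Type*} {G : SimpleGraph V}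
    {d : Option V → Option V → ℝ} (hd : IsMetric d) {p : V → ℝ}
    (hp : ∀ i j, d (some i) (some j) = |p i - p j|)
    (hadj : ∀ i j, i ≠ j → (G.Adj i j ↔ Aligned d none (some i) (some j))) :
    IsEndpointModel G (fun i => p i - d none (some i)) (fun i => p i + d none (some i)) where
  lt i := by linarith [hd.pos (Option.some_ne_none i).symm]
  mid_injective i j h := by
    by_contra hij
    have := hd.pos (Option.some_injective V |>.ne hij)
    rw [hp, show p i = p j by linarith, sub_self, abs_zero] at this
    exact this.false
  le_of_mid_lt i j h := by
    have hij : d (some i) (some j) = p j - p i := by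
      rw [hp, abs_sub_comm, abs_of_pos (by linarith)]
    have := hd.triangle none (some i) (some j); have := hd.triangle none (some j) (some i)
    have := hd.triangle (some i) none (some j)
    have := hd.symm (some i) (some j); have := hd.symm (some i) none
    refine ⟨?_, ?_, ?_⟩ <;> linarith
  adj_iff i j hij := by
    rw [hadj i j hij, Aligned, hp, hp, hd.symm (some j) none, hd.symm (some i) none]
    exact exists_common_endpoint_iff (hd.nonneg _ _) (hd.nonneg _ _)

namespace IsEndpointModel

variable {V : Type*} {G : SimpleGraph V} {l r : V → ℝ} (M : IsEndpointModel G l r)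
include M

theorem adj_of_common_endpoint {i j : V} {v : ℝ} (hij : i ≠ j) (hi : l i = v ∨ r i = v)
    (hj : l j = v ∨ r j = v) : G.Adj i j :=
  (M.adj_iff i j hij).mpr ⟨v, hi, hj⟩

theorem eq_of_endpoints_eq {i j : V} (hl : l i = l j) (hr : r i = r j) : i = j :=
  M.mid_injective (by simp only [hl, hr])

theorem mid_lt_or_gt {i j : V} (hij : i ≠ j) : l i + r i < l j + r j ∨ l j + r j < l i + r i :=
  lt_or_gt_of_ne (M.mid_injective.ne hij)

theorem false_of_three_common_endpoint (hG : G.CliqueFree 3) {i j k : V} {v : ℝ}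
    (hij : i ≠ j) (hik : i ≠ k) (hjk : j ≠ k) (hi : l i = v ∨ r i = v)
    (hj : l j = v ∨ r j = v) (hk : l k = v ∨ r k = v) : False := by
  classical
  exact hG {i, j, k} (SimpleGraph.is3Clique_triple_iff.mpr
    ⟨M.adj_of_common_endpoint hij hi hj, M.adj_of_common_endpoint hik hi hk,
      M.adj_of_common_endpoint hjk hj hk⟩)

theorem mid_lt_of_right_eq_left (hG : G.CliqueFree 3) {i j : V} (h : r i = l j) :
    (∀ k ≠ i, l i + r i < l k + r k) ∧ ∀ k ≠ j, l k + r k < l j + r j := by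
  have hi := M.lt i; have hj := M.lt j
  have hij : l i + r i < l j + r j := by linarith
  have hne : i ≠ j := fun e => by rw [e] at h; linarith
  constructor
  · intro k hki
    rcases eq_or_ne k j with rfl | hkj
    · exact hij
    refine (M.mid_lt_or_gt hki.symm).resolve_right fun hki' => ?_
    have := (M.le_of_mid_lt k i hki').2.1
    have := (M.le_of_mid_lt k j (hki'.trans hij)).2.2
    exact M.false_of_three_common_endpoint hG hki hkj hne (Or.inr (by linarith) : _ ∨ r k = r i)
      (Or.inr rfl) (Or.inl h.symm)
  · intro k hkj
    rcases eq_or_ne k i with rfl | hki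
    · exact hij
    refine (M.mid_lt_or_gt hkj).resolve_right fun hjk => ?_
    have := (M.le_of_mid_lt j k hjk).1
    have := (M.le_of_mid_lt i k (hij.trans hjk)).2.2
    exact M.false_of_three_common_endpoint hG hki hkj hne (Or.inl (by linarith) : l k = l j ∨ _)
      (Or.inr h) (Or.inl rfl)

theorem eq_of_right_eq_left (hG : G.CliqueFree 3) {i j i' j' : V} (h : r i = l j)
    (h' : r i' = l j') : i = i' ∧ j = j' := by
  have H := M.mid_lt_of_right_eq_left hG h
  have H' := M.mid_lt_of_right_eq_left hG h'
  constructor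
  · by_contra hne; linarith [H.1 i' (Ne.symm hne), H'.1 i hne]
  · by_contra hne; linarith [H.2 j' (Ne.symm hne), H'.2 j hne]


theorem left_eq_or_right_eq_of_mid_lt {i j : V} (hij : l i + r i < l j + r j) (hadj : G.Adj i j)
    (h : r i ≠ l j) : l i = l j ∨ r i = r j := by
  obtain ⟨v, hi, hj⟩ := (M.adj_iff i j hadj.ne).mp hadj
  have := M.lt i; have := M.le_of_mid_lt i j hij
  rcases hi with rfl | rfl <;> rcases hj with hj | hj
  · exact Or.inl hj.symm
  · linarith
  · exact absurd hj.symm h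
  · exact Or.inr hj.symm

theorem false_of_left_eq_of_right_eq {m j k : V} (hjm : j ≠ m) (hkm : k ≠ m)
    (hj : l m + r m < l j + r j) (hk : l m + r m < l k + r k)
    (hl : l m = l j) (hr : r m = r k) : False := by
  have := M.le_of_mid_lt m j hj; have := M.le_of_mid_lt m k hk
  rcases eq_or_ne j k with rfl | hjk
  · exact hjm (M.eq_of_endpoints_eq hl.symm hr.symm)
  rcases M.mid_lt_or_gt hjk with h | h
  · exact hjm (M.eq_of_endpoints_eq hl.symm (by linarith [(M.le_of_mid_lt j k h).2.1]))
  · exact hkm (M.eq_of_endpoints_eq (by linarith [(M.le_of_mid_lt k j h).1]) hr.symm)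

theorem right_eq_left_of_isMin (hG : G.CliqueFree 3) {m j k : V}
    (hm : ∀ i, l m + r m ≤ l i + r i) (hj : G.Adj m j) (hk : G.Adj m k) (hjk : j ≠ k) :
    r m = l j ∨ r m = l k := by
  have hmj := (hm j).lt_of_ne (M.mid_injective.ne hj.ne)
  have hmk := (hm k).lt_of_ne (M.mid_injective.ne hk.ne)
  by_contra! h
  rcases M.left_eq_or_right_eq_of_mid_lt hmj hj h.1 with hj' | hj' <;>
    rcases M.left_eq_or_right_eq_of_mid_lt hmk hk h.2 with hk' | hk'
  · exact M.false_of_three_common_endpoint hG hj.ne hk.ne hjk (Or.inl rfl) (Or.inl hj'.symm)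
      (Or.inl hk'.symm)
  · exact M.false_of_left_eq_of_right_eq hj.ne.symm hk.ne.symm hmj hmk hj' hk'
  · exact M.false_of_left_eq_of_right_eq hk.ne.symm hj.ne.symm hmk hmj hk' hj'
  · exact M.false_of_three_common_endpoint hG hj.ne hk.ne hjk (Or.inr rfl) (Or.inr hj'.symm)
      (Or.inr hk'.symm)

/-- Along an edge `ij`, the right end of `j` is used iff the right end of `i` is used, unless
the two intervals merely touch, in which case exactly one of them is. -/
theorem right_eq_endpoint_iff {i j : V} (hadj : G.Adj i j) :
    (r j = l i ∨ r j = r i) ↔ ((r i = l j ∨ r i = r j) ↔ ¬(r i = l j ∨ l i = r j)) := by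
  obtain ⟨v, hi, hj⟩ := (M.adj_iff i j hadj.ne).mp hadj
  have := M.lt i; have := M.lt j
  have hne : ¬(l i = l j ∧ r i = r j) := fun h => hadj.ne (M.eq_of_endpoints_eq h.1 h.2)
  generalize l i = li, r i = ri, l j = lj, r j = rj at *
  rcases hi with rfl | rfl <;> rcases hj with rfl | rfl <;> grind -ring

theorem right_eq_endpoint_iff_not (hG : G.CliqueFree 3) {i j k : V} (hij : G.Adj j i)
    (hjk : G.Adj j k) (hik : i ≠ k) : (r j = l i ∨ r j = r i) ↔ ¬(r j = l k ∨ r j = r k) := by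
  constructor
  · rintro hi hk
    exact M.false_of_three_common_endpoint hG hij.ne hjk.ne hik (Or.inr rfl)
      (hi.imp Eq.symm Eq.symm) (hk.imp Eq.symm Eq.symm)
  · intro hk
    by_contra hi
    have hleft : ∀ {x}, G.Adj j x → ¬(r j = l x ∨ r j = r x) → l x = l j ∨ r x = l j := by
      intro x hx hn
      obtain ⟨v, hjv, hxv⟩ := (M.adj_iff j x hx.ne).mp hx
      rcases hjv with rfl | rfl
      · exact hxv
      · exact absurd (hxv.imp Eq.symm Eq.symm) hn
    exact M.false_of_three_common_endpoint hG hij.ne hjk.ne hik (Or.inl rfl) (hleft hij hi)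
      (hleft hjk hk)

end IsEndpointModel

theorem Fin.even_card_filter_of_iff_succ {n : ℕ} [NeZero n] (hn : Even n) {P T : Fin n → Prop}
    [DecidablePred T] (h : ∀ i, P (i + 1) ↔ (P i ↔ T i)) : Even #{i | T i} := by
  classical
  let f : Fin n → ZMod 2 := fun i => if P i then 1 else 0
  have hf : ∀ i, f (i + 1) = f i + 1 + if T i then 1 else 0 := by
    intro i
    by_cases hp : P i <;> by_cases ht : T i <;> simp +decide [f, hp, ht, h i]
  have hsum := Equiv.sum_comp (Equiv.addRight (1 : Fin n)) f
  simp only [Equiv.coe_addRight, hf, Finset.sum_add_distrib, Finset.sum_const, Finset.card_univ,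
    Fintype.card_fin, nsmul_eq_mul, mul_one, Finset.sum_boole, add_assoc, add_eq_left] at hsum
  refine (Nat.even_add.mp ?_).mp hn
  rw [← ZMod.natCast_eq_zero_iff_even, Nat.cast_add, hsum]

theorem cycleGraph_adj_add_one (n : ℕ) (i : Fin (n + 2)) :
    (SimpleGraph.cycleGraph (n + 2)).Adj i (i + 1) := by
  rw [SimpleGraph.cycleGraph_adj, add_sub_cancel_left]
  exact Or.inr rfl

theorem Fin.add_one_add_one_ne (n : ℕ) (i : Fin (n + 3)) : i + 1 + 1 ≠ i := by
  rw [Ne, add_assoc, add_eq_left, Fin.ext_iff, Fin.val_zero]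
  show 2 % (n + 3) ≠ 0
  rw [Nat.mod_eq_of_lt (by omega)]; omega

theorem cycleGraph_cliqueFree_three (n : ℕ) : (SimpleGraph.cycleGraph (n + 4)).CliqueFree 3 := by
  intro s hs
  obtain ⟨a, b, c, hab, hac, hbc, rfl⟩ := SimpleGraph.is3Clique_iff.mp hs
  rw [SimpleGraph.cycleGraph_adj] at hab hac hbc
  have h1 : (1 : Fin (n + 4)) ≠ 0 := by simp
  have h3 : (3 : Fin (n + 4)) ≠ 0 := by
    rw [Ne, Fin.ext_iff, Fin.val_zero]
    show 3 % (n + 4) ≠ 0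
    rw [Nat.mod_eq_of_lt (by omega)]; omega
  open Fin.CommRing in grind

theorem not_isEndpointModel_cycleGraph {n : ℕ} (hn : Even n) (h4 : 4 ≤ n) (l r : Fin n → ℝ) :
    ¬IsEndpointModel (SimpleGraph.cycleGraph n) l r := by
  intro M
  obtain ⟨k, rfl⟩ := Nat.exists_eq_add_of_le' h4
  have hG := cycleGraph_cliqueFree_three k
  have hadj := cycleGraph_adj_add_one (k + 2)
  have h2 := Fin.add_one_add_one_ne (k + 1)
  let T (i : Fin (k + 4)) : Prop := r i = l (i + 1) ∨ l i = r (i + 1)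
  have hpar : Even #{i | T i} := by
    refine Fin.even_card_filter_of_iff_succ hn (P := fun i => r i = l (i + 1) ∨ r i = r (i + 1))
      fun i => ?_
    rw [M.right_eq_endpoint_iff_not hG (hadj (i + 1)) (hadj i).symm (h2 i),
      M.right_eq_endpoint_iff (hadj i)]
    tauto
  obtain ⟨m, hm⟩ := Finite.exists_min fun i => l i + r i
  have hT : ∃ i, T i := by
    have hm' : (SimpleGraph.cycleGraph (k + 4)).Adj m (m - 1) := by
      simpa using (hadj (m - 1)).symm
    have hne : m + 1 ≠ m - 1 := fun h => h2 (m - 1) (by rw [sub_add_cancel, h])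
    rcases M.right_eq_left_of_isMin hG hm (hadj m) hm' hne with h | h
    · exact ⟨m, Or.inl h⟩
    · exact ⟨m - 1, Or.inr (by rw [sub_add_cancel]; exact h.symm)⟩
  have huniq : ∀ i j, T i → T j → i = j := by
    intro i j hi hj
    rcases hi with hi | hi <;> rcases hj with hj | hj
    · exact (M.eq_of_right_eq_left hG hi hj).1
    · obtain ⟨h, h'⟩ := M.eq_of_right_eq_left hG hi hj.symm
      exact absurd (by rw [h', h]) (h2 i)
    · obtain ⟨h, h'⟩ := M.eq_of_right_eq_left hG hi.symm hj
      exact absurd (by rw [h, h']) (h2 i)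
    · exact add_right_cancel (M.eq_of_right_eq_left hG hi.symm hj.symm).1
  obtain ⟨i, hi⟩ := hT
  have : ({i | T i} : Finset (Fin (k + 4))) = {i} :=
    Finset.eq_singleton_iff_unique_mem.mpr
      ⟨Finset.mem_filter.mpr ⟨Finset.mem_univ i, hi⟩,
        fun j hj => huniq j i (Finset.mem_filter.mp hj).2 hi⟩
  rw [this, Finset.card_singleton] at hpar
  exact Nat.not_even_one hpar

theorem insert_none_mem_basedOn_iff {V : Type*} {G : SimpleGraph V} {u v : V} (huv : u ≠ v) :
    ({none, some u, some v} : Set (Option V)) ∈ basedOn G ↔ G.Adj u v := by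
  refine ⟨?_, fun h => Or.inr ⟨u, v, h, rfl⟩⟩
  rintro (⟨a, b, c, -, -, -, hs⟩ | ⟨a, b, hab, hs⟩)
  · have : none ∈ ({some a, some b, some c} : Set (Option V)) := hs ▸ Or.inl rfl
    simp at this
  · have hu : some u ∈ ({none, some a, some b} : Set (Option V)) := hs ▸ Or.inr (Or.inl rfl)
    have hv : some v ∈ ({none, some a, some b} : Set (Option V)) := hs ▸ Or.inr (Or.inr rfl)
    simp only [Set.mem_insert_iff, Set.mem_singleton_iff, reduceCtorEq, Option.some.injEq,
      false_or] at hu hv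
    rcases hu with rfl | rfl <;> rcases hv with rfl | rfl
    exacts [absurd rfl huv, hab, hab.symm, absurd rfl huv]

theorem exists_isEndpointModel_of_basedOn_eq {V : Type*} [Fintype V] {G : SimpleGraph V}
    (hV : 5 ≤ Fintype.card V) {d : Option V → Option V → ℝ} (hd : IsMetric d)
    (hE : basedOn G = metricEdges d) : ∃ l r : V → ℝ, IsEndpointModel G l r := by
  have hsome := hd.comp (Option.some_injective V)
  have hal (u v w : V) : Aligned (fun x y => d (some x) (some y)) u v w := by
    by_cases h : u = v ∨ u = w ∨ v = w
    · exact hsome.aligned_of_eq_or_eq_or_eq h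
    obtain ⟨huv, huw, hvw⟩ : u ≠ v ∧ u ≠ w ∧ v ≠ w := by tauto
    have hmem : ({some u, some v, some w} : Set (Option V)) ∈ metricEdges d :=
      hE ▸ Or.inl ⟨u, v, w, huv, huw, hvw, rfl⟩
    exact (mem_metricEdges_iff hd (by simpa) (by simpa) (by simpa)).mp hmem
  obtain ⟨p, hp⟩ := exists_eq_abs_sub_of_aligned hsome hV hal
  refine ⟨_, _, IsEndpointModel.of_metric hd hp fun i j hij => ?_⟩
  rw [← mem_metricEdges_iff hd (Option.some_ne_none i).symm (Option.some_ne_none j).symm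
    (by simpa), ← hE, insert_none_mem_basedOn_iff hij]

/-- For every even integer `n > 4`, the hypergraph based on the cycle `C_n`
is not metric. -/
theorem stmt_1 (n : ℕ) (hn : Even n) (h4 : 4 < n) :
    ¬ IsMetricHypergraph (basedOn (SimpleGraph.cycleGraph n)) := by
  rintro ⟨d, hd, hE⟩
  obtain ⟨l, r, M⟩ :=
    exists_isEndpointModel_of_basedOn_eq (by rw [Fintype.card_fin]; exact h4) hd hE
  exact not_isEndpointModel_cycleGraph hn h4.le l r M
end

section
/- For every odd integer n greater than one, the 3-uniform hypergraph based on the cycle C_n is metric. -/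
/-!
Put the vertices `i` of `C_n` on a line at positions `2i` and the extra point `x` at distance
`n - 1` from the even vertices and `n + 1` from the odd ones (all distances are doubled so that
they are integers). Three vertices of the cycle are always collinear. For `i ≠ j` the heights `h`
satisfy `|h i - h j| ≤ 2|i - j| ≤ h i + h j`, and `{x, i, j}` is a hyperedge exactly when one of
these is an equality: the first when `|i - j| = 1`, the second when `{i, j} = {0, n - 1}`, two
even vertices because `n` is odd. These are exactly the edges of `C_n`.
-/

universe u

theorem abs_sub_add_abs_sub_eq_or (x y z : ℝ) :
    |x - y| + |y - z| = |x - z| ∨ |y - z| + |z - x| = |y - x| ∨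
      |z - x| + |x - y| = |z - y| := by
  have hcol : Collinear ℝ ({x, y, z} : Set ℝ) :=
    collinear_iff_finrank_le_one.mpr ((Submodule.finrank_le _).trans (by simp))
  simpa only [← Real.dist_eq] using
    hcol.wbtw_or_wbtw_or_wbtw.imp Wbtw.dist_add_dist (Or.imp Wbtw.dist_add_dist Wbtw.dist_add_dist)

section Apex

variable {V : Type*} (p h : V → ℝ)

def apexDist : Option V → Option V → ℝ
  | none, none => 0
  | none, some i => h i
  | some i, none => h i
  | some i, some j => |p i - p j|

/-- The three ways in which one of `none, some i, some j` lies between the other two for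
`apexDist p h`. -/
def ApexAligned (i j : V) : Prop :=
  h i + |p i - p j| = h j ∨ |p i - p j| + h j = h i ∨ h i + h j = |p i - p j|

variable {p h}

theorem isMetric_apexDist (hp : Function.Injective p) (hpos : ∀ i, 0 < h i)
    (hlip : ∀ i j, h i ≤ h j + |p i - p j|) (hsum : ∀ i j, |p i - p j| ≤ h i + h j) :
    IsMetric (apexDist p h) where
  eq_iff := by
    rintro (_ | i) (_ | j)
    · simp [apexDist]
    · simp [apexDist, (hpos j).ne']
    · simp [apexDist, (hpos i).ne']
    · simp [apexDist, sub_eq_zero, hp.eq_iff]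
  symm := by
    rintro (_ | i) (_ | j) <;> simp [apexDist, abs_sub_comm]
  triangle := by
    rintro (_ | x) (_ | y) (_ | z) <;> simp only [apexDist]
    · simp
    · simp
    · linarith [hpos y]
    · linarith [hlip z y, abs_sub_comm (p y) (p z)]
    · simp
    · exact hsum x z
    · linarith [hlip x y]
    · exact abs_sub_le _ _ _

theorem insert_some_mem_metricEdges_apexDist {a b c : V} (hab : a ≠ b) (hac : a ≠ c)
    (hbc : b ≠ c) :
    ({some a, some b, some c} : Set (Option V)) ∈ metricEdges (apexDist p h) := by
  have hab' := (Option.some_injective V).ne hab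
  have hac' := (Option.some_injective V).ne hac
  have hbc' := (Option.some_injective V).ne hbc
  rcases abs_sub_add_abs_sub_eq_or (p a) (p b) (p c) with habc | hbca | hcab
  · exact ⟨some a, some b, some c, rfl, hab', hac', hbc', habc⟩
  · refine ⟨some b, some c, some a, ?_, hbc', hab'.symm, hac'.symm, hbca⟩
    rw [Set.insert_comm (some a), Set.pair_comm (some a)]
  · refine ⟨some c, some a, some b, ?_, hac'.symm, hbc'.symm, hab', hcab⟩
    rw [Set.pair_comm (some b), Set.insert_comm (some a)]

theorem insert_none_mem_metricEdges_apexDist {i j : V} (hij : i ≠ j)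
    (hal : ApexAligned p h i j) :
    ({none, some i, some j} : Set (Option V)) ∈ metricEdges (apexDist p h) := by
  have hij' := (Option.some_injective V).ne hij
  rcases hal with hnij | hijn | hinj
  · exact ⟨none, some i, some j, rfl, by simp, by simp, hij', hnij⟩
  · refine ⟨some i, some j, none, ?_, hij', by simp, by simp, hijn⟩
    rw [Set.insert_comm none, Set.pair_comm none]
  · exact ⟨some i, none, some j, Set.insert_comm _ _ _, by simp, hij', by simp, hinj⟩

theorem metricEdges_apexDist_subset_basedOn {G : SimpleGraph V}
    (hadj : ∀ i j, i ≠ j → (G.Adj i j ↔ ApexAligned p h i j)) :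
    metricEdges (apexDist p h) ⊆ basedOn G := by
  rintro s ⟨u, v, w, rfl, huv, huw, hvw, hbtw⟩
  rcases u with _ | a <;> rcases v with _ | b <;> rcases w with _ | c <;>
    simp only [ne_eq, reduceCtorEq, not_false_eq_true, not_true_eq_false, Option.some.injEq]
      at huv huw hvw
  · exact .inr ⟨b, c, (hadj b c hvw).mpr (.inl hbtw), rfl⟩
  · exact .inr ⟨a, c, (hadj a c huw).mpr (.inr (.inr hbtw)), Set.insert_comm _ _ _⟩
  · refine .inr ⟨a, b, (hadj a b huv).mpr (.inr (.inl hbtw)), ?_⟩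
    rw [Set.insert_comm none, Set.pair_comm none]
  · exact .inl ⟨a, b, c, huv, huw, hvw, rfl⟩

theorem isMetricHypergraph_basedOn_of_apexAligned (G : SimpleGraph V)
    (hp : Function.Injective p) (hpos : ∀ i, 0 < h i) (hlip : ∀ i j, h i ≤ h j + |p i - p j|)
    (hsum : ∀ i j, |p i - p j| ≤ h i + h j)
    (hadj : ∀ i j, i ≠ j → (G.Adj i j ↔ ApexAligned p h i j)) :
    IsMetricHypergraph (basedOn G) := by
  refine ⟨apexDist p h, isMetric_apexDist hp hpos hlip hsum,
    subset_antisymm ?_ (metricEdges_apexDist_subset_basedOn hadj)⟩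
  rintro s (⟨a, b, c, hab, hac, hbc, rfl⟩ | ⟨i, j, hij, rfl⟩)
  · exact insert_some_mem_metricEdges_apexDist hab hac hbc
  · exact insert_none_mem_metricEdges_apexDist hij.ne ((hadj i j hij.ne).mp hij)

end Apex

theorem SimpleGraph.cycleGraph_adj_iff_val {n : ℕ} (hn : 1 < n) {u v : Fin n} :
    (SimpleGraph.cycleGraph n).Adj u v ↔
      (u : ℕ) = v + 1 ∨ (u : ℕ) + n = v + 1 ∨ (v : ℕ) = u + 1 ∨ (v : ℕ) + n = u + 1 := by
  have hsub (a b : Fin n) :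
      ((a - b : Fin n) : ℕ) = 1 ↔ (a : ℕ) = b + 1 ∨ (a : ℕ) + n = b + 1 := by
    rcases le_or_gt b a with hba | hab
    · rw [Fin.coe_sub_iff_le.mpr hba]; omega
    · rw [Fin.coe_sub_iff_lt.mpr hab]; omega
  rw [SimpleGraph.cycleGraph_adj', hsub, hsub, or_assoc]

section Cycle

variable {n : ℕ}

def cyclePos (i : Fin n) : ℤ := 2 * i

def cycleHeight (n : ℕ) (i : Fin n) : ℤ := n - 1 + 2 * ((i : ℤ) % 2)

theorem cyclePos_injective : Function.Injective (cyclePos (n := n)) := by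
  intro i j hij
  unfold cyclePos at hij
  omega

theorem cycleHeight_pos (h1 : 1 < n) (i : Fin n) : 0 < cycleHeight n i := by
  unfold cycleHeight
  omega

theorem cycleHeight_le_add_abs (i j : Fin n) :
    cycleHeight n i ≤ cycleHeight n j + |cyclePos i - cyclePos j| := by
  unfold cycleHeight cyclePos
  rw [abs_eq_max_neg]
  omega

theorem abs_cyclePos_sub_le (i j : Fin n) :
    |cyclePos i - cyclePos j| ≤ cycleHeight n i + cycleHeight n j := by
  unfold cycleHeight cyclePos
  have := i.isLt
  have := j.isLt
  rw [abs_eq_max_neg]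
  omega

theorem cycleGraph_adj_iff_apexAligned (hn : Odd n) (h1 : 1 < n) {i j : Fin n} (hij : i ≠ j) :
    (SimpleGraph.cycleGraph n).Adj i j ↔
      ApexAligned (fun i => (cyclePos i : ℝ)) (fun i => (cycleHeight n i : ℝ)) i j := by
  rw [SimpleGraph.cycleGraph_adj_iff_val h1]
  simp only [ApexAligned]
  norm_cast
  unfold cyclePos cycleHeight
  have := Fin.val_ne_of_ne hij
  have := i.isLt
  have := j.isLt
  obtain ⟨k, rfl⟩ := hn
  simp only [abs_eq_max_neg]
  omega

end Cycle

/-- For every odd integer `n > 1`, the hypergraph based on `C_n` is metric. -/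
theorem stmt_4 (n : ℕ) (hn : Odd n) (h1 : 1 < n) :
    IsMetricHypergraph (basedOn (SimpleGraph.cycleGraph n)) :=
  isMetricHypergraph_basedOn_of_apexAligned (p := fun i => (cyclePos i : ℝ))
    (h := fun i => (cycleHeight n i : ℝ)) _ (Int.cast_injective.comp cyclePos_injective)
    (fun i => Int.cast_pos.mpr (cycleHeight_pos h1 i))
    (fun i j => by exact_mod_cast cycleHeight_le_add_abs i j)
    (fun i j => by exact_mod_cast abs_cyclePos_sub_le i j)
    (fun _ _ hij => cycleGraph_adj_iff_apexAligned hn h1 hij)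
end
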